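/- Let λ, r, s be real numbers with s ≠ 0 and sλ < 0, let ε = ±1, and define u(ξ) = −(rε/(6s)) √(−6s/λ) [1 − tanh(rξ/(6s))]. Then u satisfies the traveling-wave mKdV–Burgers ODE ω u' + λ u² u' + r u'' + s u''' = 0 with ω = 2r²/(9s), for all ξ ∈ ℝ. -/

import Mathlib

/-!
Writing `T = tanh (c ξ)` with `c = r / (6 s)`, the profile is `u = A (1 - T)` and `T' = c (1 - T²)`,
so every derivative of `u` is a polynomial in `T`. Since `r = 6 s c`, `ω = 8 s c²`, and the choice
of amplitude gives `λ A² = -6 s c²`, the left-hand side of the ODE becomes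
`2 s A c³ (1 - T²) (-4 + 3 (1 - T)² + 6 T + 1 - 3 T²)`, which vanishes identically.
-/

open Real

theorem Real.hasDerivAt_tanh (x : ℝ) : HasDerivAt tanh (1 - tanh x ^ 2) x := by
  have hcosh : cosh x ≠ 0 := (cosh_pos x).ne'
  have hquot := (hasDerivAt_sinh x).div (hasDerivAt_cosh x) hcosh
  rw [show tanh = fun y => sinh y / cosh y from funext tanh_eq_sinh_div_cosh]
  refine hquot.congr_deriv ?_
  have := cosh_sq_sub_sinh_sq x
  field_simp

section TanhKink

variable (A c : ℝ)

theorem hasDerivAt_tanh_const_mul (x : ℝ) :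
    HasDerivAt (fun y => tanh (c * y)) (c * (1 - tanh (c * x) ^ 2)) x := by
  have hlin : HasDerivAt (fun y => c * y) c x := by
    simpa using (hasDerivAt_id x).const_mul c
  exact ((hasDerivAt_tanh (c * x)).comp x hlin).congr_deriv (mul_comm _ _)

theorem deriv_tanh_kink :
    deriv (fun x => A * (1 - tanh (c * x))) = fun x => -(A * c) * (1 - tanh (c * x) ^ 2) := by
  funext x
  refine ((((hasDerivAt_tanh_const_mul c x).const_sub 1).const_mul A).congr_deriv ?_).deriv
  ring

theorem deriv_deriv_tanh_kink :
    deriv (deriv (fun x => A * (1 - tanh (c * x)))) =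
      fun x => 2 * A * c ^ 2 * (tanh (c * x) * (1 - tanh (c * x) ^ 2)) := by
  rw [deriv_tanh_kink]
  funext x
  refine (((((hasDerivAt_tanh_const_mul c x).pow 2).const_sub 1).const_mul
    (-(A * c))).congr_deriv ?_).deriv
  ring

theorem deriv_deriv_deriv_tanh_kink :
    deriv (deriv (deriv (fun x => A * (1 - tanh (c * x))))) =
      fun x => 2 * A * c ^ 3 * ((1 - tanh (c * x) ^ 2) * (1 - 3 * tanh (c * x) ^ 2)) := by
  rw [deriv_deriv_tanh_kink]
  funext x
  have hT := hasDerivAt_tanh_const_mul c x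
  refine (((hT.mul ((hT.pow 2).const_sub 1)).const_mul (2 * A * c ^ 2)).congr_deriv ?_).deriv
  simp only [Pi.pow_apply]
  ring

end TanhKink

theorem mul_sq_tanh_kink_amplitude {lam r s ε : ℝ} (hs : s ≠ 0) (hsl : s * lam < 0) (hε : ε ^ 2 = 1) :
    lam * (-(r * ε / (6 * s)) * √(-6 * s / lam)) ^ 2 = -6 * s * (r / (6 * s)) ^ 2 := by
  have hlam : lam ≠ 0 := by rintro rfl; simp at hsl
  have hrad : 0 ≤ -6 * s / lam := by
    rw [show -6 * s / lam = -6 * (s * lam) / lam ^ 2 by field_simp]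
    exact div_nonneg (by linarith) (sq_nonneg lam)
  rw [mul_pow, sq_sqrt hrad]
  field_simp
  linear_combination (-r ^ 2) * hε

theorem mkdvBurgers_tanh_kink_residual {A c s lam : ℝ} (hA : lam * A ^ 2 = -6 * s * c ^ 2)
    (t : ℝ) :
    8 * s * c ^ 2 * (-(A * c) * (1 - t ^ 2))
      + lam * (A * (1 - t)) ^ 2 * (-(A * c) * (1 - t ^ 2))
      + 6 * s * c * (2 * A * c ^ 2 * (t * (1 - t ^ 2)))
      + s * (2 * A * c ^ 3 * ((1 - t ^ 2) * (1 - 3 * t ^ 2))) = 0 := by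
  linear_combination (-(A * c) * (1 - t) ^ 2 * (1 - t ^ 2)) * hA

theorem mkdv_burgers_tanh_solution
    (lam r s ε : ℝ) (hs : s ≠ 0) (hsl : s * lam < 0) (hε : ε = 1 ∨ ε = -1)
    (u : ℝ → ℝ)
    (hu : ∀ ξ, u ξ =
      -(r * ε / (6 * s)) * Real.sqrt (-6 * s / lam) *
        (1 - Real.tanh (r * ξ / (6 * s))))
    (ξ : ℝ) :
    (2 * r ^ 2 / (9 * s)) * deriv u ξ + lam * u ξ ^ 2 * deriv u ξ
      + r * deriv (deriv u) ξ + s * deriv (deriv (deriv u)) ξ = 0 := by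
  set A := -(r * ε / (6 * s)) * √(-6 * s / lam)
  set c := r / (6 * s)
  have hε2 : ε ^ 2 = 1 := by rcases hε with rfl | rfl <;> norm_num
  have hr : r = 6 * s * c := by simp only [c]; field_simp
  have hω : 2 * r ^ 2 / (9 * s) = 8 * s * c ^ 2 := by rw [hr]; field_simp; ring
  have hu' : u = fun x => A * (1 - tanh (c * x)) := by
    funext x
    rw [hu x, show r * x / (6 * s) = c * x by simp only [c]; ring]
  rw [hω, hu', deriv_deriv_deriv_tanh_kink, deriv_deriv_tanh_kink, deriv_tanh_kink]
  have hA : lam * A ^ 2 = -6 * s * c ^ 2 := mul_sq_tanh_kink_amplitude hs hsl hε2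
  have hres := mkdvBurgers_tanh_kink_residual hA (tanh (c * ξ))
  rwa [← hr] at hres
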